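/- Each coordinate function x_i of the n-dimensional Peano curve satisfies the self-affinity identity: for every k ∈ ℕ and t = Φ((t_s)) ∈ [0,1], writing t(k) = Φ(t_1,…,t_{kn},0,0,…), one has 3^k (x_i(t) − x_i(t(k))) = (−1)^{σ(k)} x_i(3^{kn}(t − t(k))), where σ(k) = ∑_{q=1}^{kn} t_q − ∑_{r=0}^{k−1} t_{i+rn}. -/

import Mathlib

open scoped BigOperators ENNReal

/-- `Φ` : evaluation of a ternary digit sequence (digits at indices `1,2,3,…`). -/
noncomputable def Phi (t : ℕ → ℕ) : ℝ := ∑' k : ℕ, (t (k + 1) : ℝ) / 3 ^ (k + 1)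

/-- A sequence of ternary digits (elements of `D = {0,1,2}`). -/
def IsDigitSeq (t : ℕ → ℕ) : Prop := ∀ k, t k ≤ 2

/-- `S_{i+jn}(𝐭) = ∑_{k=1}^{i+jn} t_k − ∑_{s=0}^{j} t_{i+sn}`. -/
def S (n i j : ℕ) (t : ℕ → ℕ) : ℤ :=
  (∑ k ∈ Finset.Icc 1 (i + j * n), (t k : ℤ)) -
    ∑ s ∈ Finset.range (j + 1), (t (i + s * n) : ℤ)

/-- The operator `ξ(a) = 2 − a`, as a permutation of `ℝ` (so that integer powers
`ξ^m`, `m : ℤ`, make sense). -/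
def xiPerm : Equiv.Perm ℝ :=
  ⟨fun a => 2 - a, fun a => 2 - a, fun a => by dsimp; ring, fun a => by dsimp; ring⟩

/-- `x_i(𝐭) = ∑_{j=0}^∞ ξ^{S_{i+jn}(𝐭)}(t_{i+jn}) / 3^{j+1}`. -/
noncomputable def xcoord (n i : ℕ) (t : ℕ → ℕ) : ℝ :=
  ∑' j : ℕ, ((xiPerm ^ (S n i j t)) ((t (i + j * n) : ℝ))) / 3 ^ (j + 1)

/-- The canonical ternary digit expansion of `t ∈ [0,1]` (all digits `2` for `t = 1`). -/
noncomputable def ternaryDigit (t : ℝ) (k : ℕ) : ℕ :=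
  if t = 1 then 2 else (⌊t * 3 ^ k⌋).toNat % 3

/-- The `i`-th coordinate function of the `n`-dimensional Peano curve, as a function
on `[0,1]` (via the canonical ternary representation; by well-definedness this agrees
with `xcoord` on any ternary representation). -/
noncomputable def peanoCoord (n i : ℕ) (t : ℝ) : ℝ := xcoord n i (ternaryDigit t)

/-! On digit sequences the identity is a computation with the series `xcoord`: the terms with
`j < k` of `x_i(t)` and `x_i(t(k))` coincide, `S_{i+(j+k)n}` splits as `σ(k)` plus the `S` of
the shifted digits, and `ξ^m(x) = 1 + (-1)^m (x - 1)` turns the remaining differences into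
`(-1)^σ(k) 3^{-k}` times the terms of `x_i` at the shifted sequence.

To pass to `peanoCoord`, which reads the canonical expansion, `xcoord` must not depend on the
representation. Two representations of one number are twins `…(d+1)000…` and `…d222…`, whose
digit differences are odd exactly at the switching position `p`; hence `S_{i+jn}` has the same
parity for both unless `p ≤ i + jn` while `p` is not of the form `i + sn`. If `p` never is, the
terms agree one by one; if `p = i + j₀n`, the series differ by
`ε (1/3^{j₀+1} - 2 ∑_{j > j₀} 1/3^{j+1}) = 0`. -/

open Finset

theorem xiPerm_zpow_apply (m : ℤ) (x : ℝ) : (xiPerm ^ m) x = 1 + (-1) ^ m * (x - 1) := by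
  induction m using Int.induction_on generalizing x with
  | zero => simp
  | succ m ih =>
    rw [zpow_add_one, Equiv.Perm.mul_apply, ih, zpow_add_one₀ (by norm_num)]
    change 1 + (-1) ^ (m : ℤ) * (2 - x - 1) = _
    ring
  | pred m ih =>
    rw [zpow_sub_one, Equiv.Perm.mul_apply, ih, zpow_sub_one₀ (by norm_num)]
    change 1 + (-1) ^ (-(m : ℤ)) * (2 - x - 1) = _
    ring

theorem neg_one_zpow_eq_of_even_sub {m m' : ℤ} (h : Even (m - m')) :
    (-1 : ℝ) ^ m = (-1) ^ m' := by
  rw [← sub_add_cancel m m', zpow_add₀ (by norm_num), h.neg_one_zpow, one_mul]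

theorem neg_one_zpow_eq_neg_of_odd_sub {m m' : ℤ} (h : Odd (m - m')) :
    (-1 : ℝ) ^ m = -(-1) ^ m' := by
  rw [← sub_add_cancel m m', zpow_add₀ (by norm_num), h.neg_one_zpow, neg_one_mul]

theorem xiPerm_zpow_sub_xiPerm_zpow_of_even {m m' : ℤ} (h : Even (m - m')) (x y : ℝ) :
    (xiPerm ^ m) x - (xiPerm ^ m') y = (-1) ^ m * (x - y) := by
  rw [xiPerm_zpow_apply, xiPerm_zpow_apply, neg_one_zpow_eq_of_even_sub h]
  ring

theorem xiPerm_zpow_eq_of_odd {m m' : ℤ} (h : Odd (m - m')) {x y : ℝ} (hxy : x + y = 2) :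
    (xiPerm ^ m) x = (xiPerm ^ m') y := by
  rw [xiPerm_zpow_apply, xiPerm_zpow_apply, neg_one_zpow_eq_neg_of_odd_sub h,
    show y = 2 - x by linarith]
  ring

theorem xiPerm_zpow_mem_Icc (m : ℤ) {x : ℝ} (hx : x ∈ Set.Icc 0 2) :
    (xiPerm ^ m) x ∈ Set.Icc 0 2 := by
  obtain ⟨hx0, hx2⟩ := hx
  rw [xiPerm_zpow_apply]
  rcases Int.even_or_odd m with hm | hm
  · rw [hm.neg_one_zpow]; constructor <;> linarith
  · rw [hm.neg_one_zpow]; constructor <;> linarith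

theorem hasSum_two_div_three_pow (N : ℕ) :
    HasSum (fun l : ℕ => (2 : ℝ) / 3 ^ (l + N + 1)) (1 / 3 ^ N) := by
  have h := (hasSum_geometric_of_lt_one (r := (1 / 3 : ℝ)) (by norm_num) (by norm_num)).mul_left
    (2 / 3 ^ (N + 1))
  have hterm : (fun l : ℕ => (2 : ℝ) / 3 ^ (l + N + 1)) = fun l => 2 / 3 ^ (N + 1) * (1 / 3) ^ l := by
    funext l
    rw [div_pow, one_pow, pow_add, pow_add]
    field_simp
    ring
  have hval : (1 : ℝ) / 3 ^ N = 2 / 3 ^ (N + 1) * (1 - 1 / 3)⁻¹ := by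
    rw [pow_succ]
    field_simp
    norm_num
  rwa [hterm, hval]

theorem tsum_sub_tsum_eq_tsum_nat_add {f g : ℕ → ℝ} (hf : Summable f) (hg : Summable g) {k : ℕ}
    (h : ∀ j < k, f j = g j) :
    ∑' j, f j - ∑' j, g j = ∑' j, (f (j + k) - g (j + k)) := by
  rw [← hf.tsum_sub hg, ← (hf.sub hg).sum_add_tsum_nat_add k,
    Finset.sum_eq_zero fun j hj => sub_eq_zero.2 (h j (Finset.mem_range.1 hj)), zero_add]

theorem sum_Icc_one_add {M : Type*} [AddCommMonoid M] (f : ℕ → M) (a b : ℕ) :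
    ∑ q ∈ Icc 1 (a + b), f q = ∑ q ∈ Icc 1 a, f q + ∑ q ∈ Icc 1 b, f (q + a) := by
  induction b with
  | zero => simp
  | succ b ih =>
    rw [← add_assoc, Finset.sum_Icc_succ_top (by omega), ih, Finset.sum_Icc_succ_top (by omega),
      add_assoc, show a + b + 1 = b + 1 + a by omega]

theorem even_sum_iff_notMem {ι : Type*} [DecidableEq ι] {s : Finset ι} {d : ι → ℤ} {p : ι}
    (hp : Odd (d p)) (h : ∀ q ∈ s, q ≠ p → Even (d q)) :
    Even (∑ q ∈ s, d q) ↔ p ∉ s := by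
  by_cases hps : p ∈ s
  · rw [← Finset.add_sum_erase s d hps, Int.even_add]
    simp only [hps, not_true_eq_false, iff_false, Int.not_even_iff_odd.2 hp, false_iff,
      not_not]
    exact Finset.even_sum _ fun q hq => h q (Finset.mem_of_mem_erase hq) (Finset.ne_of_mem_erase hq)
  · simpa [hps] using Finset.even_sum _ fun q hq => h q hq (ne_of_mem_of_not_mem hq hps)

def truncDigits (K : ℕ) (t : ℕ → ℕ) : ℕ → ℕ := fun s => if s ≤ K then t s else 0

def shiftDigits (K : ℕ) (t : ℕ → ℕ) : ℕ → ℕ := fun s => t (s + K)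

theorem IsDigitSeq.truncDigits {t : ℕ → ℕ} (ht : IsDigitSeq t) (K : ℕ) :
    IsDigitSeq (truncDigits K t) := fun s => by
  unfold _root_.truncDigits
  split_ifs
  exacts [ht s, by omega]

theorem IsDigitSeq.shiftDigits {t : ℕ → ℕ} (ht : IsDigitSeq t) (K : ℕ) :
    IsDigitSeq (shiftDigits K t) := fun s => ht (s + K)

theorem summable_Phi_term {t : ℕ → ℕ} (ht : IsDigitSeq t) :
    Summable fun k => (t (k + 1) : ℝ) / 3 ^ (k + 1) := by
  refine Summable.of_nonneg_of_le (fun k => by positivity) (fun k => ?_)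
    (hasSum_two_div_three_pow 0).summable
  gcongr
  exact_mod_cast ht (k + 1)

theorem Phi_nonneg (t : ℕ → ℕ) : 0 ≤ Phi t :=
  tsum_nonneg fun k => by positivity

theorem Phi_const_two : Phi (fun _ => 2) = 1 := by
  have h := (hasSum_two_div_three_pow 0).tsum_eq
  simp only [add_zero, pow_zero, div_one] at h
  rw [Phi, ← h]
  norm_num

theorem Phi_le_one {t : ℕ → ℕ} (ht : IsDigitSeq t) : Phi t ≤ 1 := by
  rw [← Phi_const_two, Phi, Phi]
  refine (summable_Phi_term ht).tsum_le_tsum (fun k => ?_)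
    (summable_Phi_term (t := fun _ => 2) fun _ => le_rfl)
  gcongr
  exact_mod_cast ht (k + 1)

theorem eq_of_le_of_Phi_eq {c d : ℕ → ℕ} (hd : IsDigitSeq d) (hle : ∀ q, c q ≤ d q)
    (h : Phi c = Phi d) {q : ℕ} (hq : 1 ≤ q) : c q = d q := by
  have hc : IsDigitSeq c := fun q => (hle q).trans (hd q)
  have hsum : HasSum (fun k => ((d (k + 1) : ℝ) - c (k + 1)) / 3 ^ (k + 1)) 0 := by
    have h' := (summable_Phi_term hd).hasSum.sub (summable_Phi_term hc).hasSum
    rw [← Phi, ← Phi, h, sub_self] at h'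
    simpa only [sub_div] using h'
  have hzero := congrFun ((hasSum_zero_iff_of_nonneg fun k => div_nonneg
    (sub_nonneg.2 (by exact_mod_cast hle (k + 1))) (by positivity)).1 hsum) (q - 1)
  rw [Nat.sub_add_cancel hq, Pi.zero_apply, div_eq_zero_iff, sub_eq_zero] at hzero
  exact_mod_cast (hzero.resolve_right (by positivity)).symm

theorem Phi_eq_sum_add {t : ℕ → ℕ} (ht : IsDigitSeq t) (K : ℕ) :
    Phi t = ∑ k ∈ range K, (t (k + 1) : ℝ) / 3 ^ (k + 1) + Phi (shiftDigits K t) / 3 ^ K := by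
  rw [Phi, ← (summable_Phi_term ht).sum_add_tsum_nat_add K, Phi, ← tsum_div_const]
  congr 2 with k
  rw [shiftDigits, Nat.add_right_comm, pow_add]
  field_simp

theorem Phi_sub_Phi_truncDigits {t : ℕ → ℕ} (ht : IsDigitSeq t) (K : ℕ) :
    Phi t - Phi (truncDigits K t) = Phi (shiftDigits K t) / 3 ^ K := by
  have htail : Phi (shiftDigits K (truncDigits K t)) = 0 := by
    simp [Phi, shiftDigits, truncDigits]
  have hhead : ∑ k ∈ range K, (truncDigits K t (k + 1) : ℝ) / 3 ^ (k + 1) =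
      ∑ k ∈ range K, (t (k + 1) : ℝ) / 3 ^ (k + 1) :=
    sum_congr rfl fun k hk => by rw [truncDigits, if_pos (by simp at hk; omega)]
  rw [Phi_eq_sum_add ht K, Phi_eq_sum_add (ht.truncDigits K) K, htail, hhead]
  ring

theorem isDigitSeq_ternaryDigit (t : ℝ) : IsDigitSeq (ternaryDigit t) := fun k => by
  unfold ternaryDigit
  split_ifs
  exacts [le_rfl, by omega]

theorem Phi_ternaryDigit {t : ℝ} (h0 : 0 ≤ t) (h1 : t ≤ 1) : Phi (ternaryDigit t) = t := by
  rcases h1.eq_or_lt with rfl | hlt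
  · rw [show ternaryDigit 1 = fun _ => 2 from funext fun _ => if_pos rfl, Phi_const_two]
  · conv_rhs => rw [← Real.ofDigits_digits (b := 3) (by norm_num) ⟨h0, hlt⟩]
    refine tsum_congr fun k => ?_
    simp [ternaryDigit, hlt.ne, Real.ofDigitsTerm, Real.digits, Int.floor_toNat, div_eq_mul_inv]

/-- The two ternary expansions `0.c₁…c_{p-1}(d+1)000…` and `0.c₁…c_{p-1}d222…` of a triadic
rational. -/
structure TwinExpansions (p : ℕ) (a b : ℕ → ℕ) : Prop where
  eq_of_lt : ∀ q, 1 ≤ q → q < p → a q = b q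
  eq_succ : a p = b p + 1
  tail : ∀ q, p < q → a q = 0 ∧ b q = 2

theorem TwinExpansions.of_Phi_eq_of_lt_one {a b : ℕ → ℕ} (ha : IsDigitSeq a)
    (hb : IsDigitSeq b) (h : Phi a = Phi b) (hlt : b 1 < a 1) : TwinExpansions 1 a b := by
  have ha' := Phi_eq_sum_add ha 1
  have hb' := Phi_eq_sum_add hb 1
  simp only [range_one, sum_singleton, zero_add, pow_one] at ha' hb'
  -- `a₁ + Φ(shift a) = b₁ + Φ(shift b)` with both tails in `[0, 1]` and `a₁ ≥ b₁ + 1`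
  have hlt' : (b 1 : ℝ) + 1 ≤ a 1 := by exact_mod_cast hlt
  have := Phi_nonneg (shiftDigits 1 a)
  have := Phi_le_one (hb.shiftDigits 1)
  have hzero : Phi (fun _ => 0) = Phi (shiftDigits 1 a) := by
    rw [show Phi (fun _ => 0) = 0 by simp [Phi]]
    linarith
  have htwo : Phi (shiftDigits 1 b) = Phi (fun _ => 2) := by rw [Phi_const_two]; linarith
  refine ⟨fun q hq hq' => by omega, ?_, fun q hq => ⟨?_, ?_⟩⟩
  · have : (a 1 : ℝ) = b 1 + 1 := by linarith
    exact_mod_cast this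
  · have := eq_of_le_of_Phi_eq (ha.shiftDigits 1) (fun _ => Nat.zero_le _) hzero
      (q := q - 1) (by omega)
    simp only [shiftDigits, Nat.sub_add_cancel hq.le] at this
    exact this.symm
  · have := eq_of_le_of_Phi_eq (fun _ => le_rfl) (fun _ => hb _) htwo (q := q - 1) (by omega)
    simpa only [shiftDigits, Nat.sub_add_cancel hq.le] using this

theorem TwinExpansions.of_Phi_eq {a b : ℕ → ℕ} (ha : IsDigitSeq a) (hb : IsDigitSeq b)
    (h : Phi a = Phi b) {p : ℕ} (hp : 1 ≤ p) (hagree : ∀ q, 1 ≤ q → q < p → a q = b q)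
    (hlt : b p < a p) : TwinExpansions p a b := by
  obtain ⟨m, rfl⟩ : ∃ m, p = m + 1 := ⟨p - 1, by omega⟩
  have hshift : Phi (shiftDigits m a) = Phi (shiftDigits m b) := by
    have hhead : ∑ k ∈ range m, (a (k + 1) : ℝ) / 3 ^ (k + 1) =
        ∑ k ∈ range m, (b (k + 1) : ℝ) / 3 ^ (k + 1) :=
      sum_congr rfl fun k hk => by rw [hagree (k + 1) (by omega) (by simp at hk; omega)]
    rw [Phi_eq_sum_add ha m, Phi_eq_sum_add hb m, hhead] at h
    field_simp at h
    linarith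
  have htwin := of_Phi_eq_of_lt_one (ha.shiftDigits m) (hb.shiftDigits m) hshift
    (by simpa [shiftDigits, add_comm] using hlt)
  refine ⟨hagree, by simpa [shiftDigits, add_comm] using htwin.eq_succ, fun q hq => ?_⟩
  simpa [shiftDigits, Nat.sub_add_cancel (show m ≤ q by omega)] using htwin.tail (q - m) (by omega)

/-- The exponent `σ(k)` of the self-affinity identity. -/
def selfAffineExponent (n i k : ℕ) (t : ℕ → ℕ) : ℤ :=
  (∑ q ∈ Icc 1 (k * n), (t q : ℤ)) - ∑ r ∈ range k, (t (i + r * n) : ℤ)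

noncomputable def xTerm (n i : ℕ) (t : ℕ → ℕ) (j : ℕ) : ℝ :=
  (xiPerm ^ S n i j t) (t (i + j * n) : ℝ) / 3 ^ (j + 1)

theorem xcoord_eq_tsum_xTerm (n i : ℕ) (t : ℕ → ℕ) : xcoord n i t = ∑' j, xTerm n i t j := rfl

theorem summable_xTerm (n i : ℕ) {t : ℕ → ℕ} (ht : IsDigitSeq t) : Summable (xTerm n i t) := by
  refine Summable.of_nonneg_of_le (fun j => ?_) (fun j => ?_)
    (hasSum_two_div_three_pow 0).summable
  all_goals
    have hmem := xiPerm_zpow_mem_Icc (S n i j t) (x := t (i + j * n))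
      ⟨Nat.cast_nonneg _, by exact_mod_cast ht _⟩
    unfold xTerm
  · exact div_nonneg hmem.1 (by positivity)
  · gcongr
    exact hmem.2

theorem S_add (n i j k : ℕ) (t : ℕ → ℕ) :
    S n i (j + k) t = selfAffineExponent n i k t + S n i j (shiftDigits (k * n) t) := by
  have hIcc := sum_Icc_one_add (fun q => (t q : ℤ)) (k * n) (i + j * n)
  have hrange := sum_range_add (fun s => (t (i + s * n) : ℤ)) k (j + 1)
  rw [show k * n + (i + j * n) = i + (j + k) * n by ring] at hIcc
  rw [show k + (j + 1) = j + k + 1 by ring] at hrange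
  simp only [S, selfAffineExponent, shiftDigits, hIcc, hrange,
    show ∀ x, i + (k + x) * n = i + x * n + k * n from fun x => by ring]
  ring

section Coordinates

variable {n i : ℕ}

theorem S_congr (hi : 1 ≤ i) {a b : ℕ → ℕ} {j : ℕ}
    (h : ∀ q, 1 ≤ q → q ≤ i + j * n → a q = b q) : S n i j a = S n i j b := by
  unfold S
  congr 1
  · exact sum_congr rfl fun q hq => by rw [mem_Icc] at hq; rw [h q hq.1 hq.2]
  · refine sum_congr rfl fun s hs => ?_
    have : s * n ≤ j * n := Nat.mul_le_mul_right n (by simp at hs; omega)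
    rw [h _ (by omega) (by omega)]

theorem xTerm_congr (hi : 1 ≤ i) {a b : ℕ → ℕ} {j : ℕ}
    (h : ∀ q, 1 ≤ q → q ≤ i + j * n → a q = b q) : xTerm n i a j = xTerm n i b j := by
  rw [xTerm, xTerm, S_congr hi h, h _ (by omega) le_rfl]

theorem xcoord_congr (hi : 1 ≤ i) {a b : ℕ → ℕ} (h : ∀ q, 1 ≤ q → a q = b q) :
    xcoord n i a = xcoord n i b :=
  tsum_congr fun _ => xTerm_congr hi fun q hq _ => h q hq

theorem S_of_forall_gt_eq_zero (hn : 1 ≤ n) {t : ℕ → ℕ} {j₀ j : ℕ} (hj : j₀ ≤ j)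
    (h : ∀ q, i + j₀ * n < q → t q = 0) : S n i j t = S n i j₀ t := by
  have hmul : j₀ * n ≤ j * n := Nat.mul_le_mul_right n hj
  unfold S
  congr 1
  · refine (sum_subset (Icc_subset_Icc_right (by omega)) fun q hq hq' => ?_).symm
    simp only [mem_Icc, not_and, not_le] at hq hq'
    simp [h q (hq' hq.1)]
  · refine (sum_subset (range_subset_range.2 (by omega)) fun s _ hs => ?_).symm
    have : (j₀ + 1) * n ≤ s * n := Nat.mul_le_mul_right n (by simp at hs; omega)
    simp [h (i + s * n) (by rw [add_one_mul] at this; omega)]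

theorem xTerm_add_sub_xTerm_truncDigits (hi1 : 1 ≤ i) (hin : i ≤ n) (a : ℕ → ℕ) (k l : ℕ) :
    xTerm n i a (l + k) - xTerm n i (truncDigits (k * n) a) (l + k) =
      (-1) ^ selfAffineExponent n i k a * xTerm n i (shiftDigits (k * n) a) l / 3 ^ k := by
  have hexp : selfAffineExponent n i k (truncDigits (k * n) a) = selfAffineExponent n i k a := by
    unfold selfAffineExponent truncDigits
    congr 1
    · exact sum_congr rfl fun q hq => by rw [if_pos (mem_Icc.1 hq).2]
    · refine sum_congr rfl fun r hr => ?_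
      have : (r + 1) * n ≤ k * n := Nat.mul_le_mul_right n (by simp at hr; omega)
      rw [if_pos (by rw [add_one_mul] at this; omega)]
  have htail : S n i l (shiftDigits (k * n) (truncDigits (k * n) a)) = 0 := by
    rw [S_congr hi1 (b := fun _ => 0) fun q hq _ => by simp [shiftDigits, truncDigits]; omega]
    simp [S]
  have hidx : i + (l + k) * n = i + l * n + k * n := by ring
  have hdigit : truncDigits (k * n) a (i + l * n + k * n) = 0 := if_neg (by omega)
  simp only [xTerm, S_add, hexp, htail, hidx, hdigit, add_zero, xiPerm_zpow_apply,
    zpow_add₀ (show (-1 : ℝ) ≠ 0 by norm_num), pow_add]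
  simp only [shiftDigits]
  field_simp
  ring

theorem xcoord_sub_xcoord_truncDigits (hi1 : 1 ≤ i) (hin : i ≤ n) {a : ℕ → ℕ}
    (ha : IsDigitSeq a) (k : ℕ) :
    xcoord n i a - xcoord n i (truncDigits (k * n) a) =
      (-1) ^ selfAffineExponent n i k a * xcoord n i (shiftDigits (k * n) a) / 3 ^ k := by
  have hhead : ∀ j < k, xTerm n i a j = xTerm n i (truncDigits (k * n) a) j := fun j hj =>
    xTerm_congr hi1 fun q _ hq => by
      have : (j + 1) * n ≤ k * n := Nat.mul_le_mul_right n hj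
      rw [truncDigits, if_pos (by rw [add_one_mul] at this; omega)]
  rw [xcoord_eq_tsum_xTerm, xcoord_eq_tsum_xTerm, tsum_sub_tsum_eq_tsum_nat_add
    (summable_xTerm n i ha) (summable_xTerm n i (ha.truncDigits _)) hhead]
  simp only [xTerm_add_sub_xTerm_truncDigits hi1 hin, tsum_div_const, tsum_mul_left,
    xcoord_eq_tsum_xTerm]

theorem even_S_sub_S_iff (hn : 1 ≤ n) (hi : 1 ≤ i) {p : ℕ} (hp : 1 ≤ p) {a b : ℕ → ℕ}
    (h : TwinExpansions p a b) (j : ℕ) :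
    Even (S n i j a - S n i j b) ↔ (p ≤ i + j * n ↔ ∃ s ≤ j, i + s * n = p) := by
  set d : ℕ → ℤ := fun q => a q - b q
  have hdp : Odd (d p) := ⟨0, by simp [d, h.eq_succ]⟩
  have hd : ∀ q, 1 ≤ q → q ≠ p → Even (d q) := fun q hq hqp => by
    rcases lt_or_gt_of_ne hqp with hlt | hgt
    · simp [d, h.eq_of_lt q hq hlt]
    · exact ⟨-1, by simp [d, (h.tail q hgt).1, (h.tail q hgt).2]⟩
  have hinj : Set.InjOn (fun s => i + s * n) (range (j + 1)) := fun s _ s' _ hss' => by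
    simpa [Nat.mul_left_inj (show n ≠ 0 by omega)] using hss'
  have hdiff : S n i j a - S n i j b =
      ∑ q ∈ Icc 1 (i + j * n), d q - ∑ q ∈ (range (j + 1)).image (fun s => i + s * n), d q := by
    simp only [S, sum_image hinj, d, sum_sub_distrib]
    ring
  rw [hdiff, Int.even_sub,
    even_sum_iff_notMem hdp fun q hq => hd q (mem_Icc.1 hq).1,
    even_sum_iff_notMem hdp fun q hq => by obtain ⟨s, -, rfl⟩ := mem_image.1 hq; exact hd _ (by omega)]
  simp only [mem_Icc, mem_image, mem_range, Nat.lt_succ_iff, hp, true_and, not_iff_not]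

theorem xTerm_eq_of_twinExpansions_of_forall_ne (hn : 1 ≤ n) (hi : 1 ≤ i) {p : ℕ} (hp : 1 ≤ p)
    {a b : ℕ → ℕ} (h : TwinExpansions p a b) (hprog : ∀ s, i + s * n ≠ p) (j : ℕ) :
    xTerm n i a j = xTerm n i b j := by
  have hpar := even_S_sub_S_iff hn hi hp h j
  unfold xTerm
  congr 1
  rcases lt_or_gt_of_ne (hprog j) with hlt | hgt
  · have heven : Even (S n i j a - S n i j b) := hpar.2 (by simp [hlt, hprog])
    rw [h.eq_of_lt _ (by omega) hlt, ← sub_eq_zero, xiPerm_zpow_sub_xiPerm_zpow_of_even heven,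
      sub_self, mul_zero]
  · have hodd : Odd (S n i j a - S n i j b) :=
      Int.not_even_iff_odd.1 fun he => by simpa [hgt.le, hprog] using hpar.1 he
    rw [(h.tail _ hgt).1, (h.tail _ hgt).2]
    exact xiPerm_zpow_eq_of_odd hodd (by norm_num)

theorem xcoord_eq_of_twinExpansions_add_mul (hn : 1 ≤ n) (hi : 1 ≤ i) {a b : ℕ → ℕ}
    (ha : IsDigitSeq a) (hb : IsDigitSeq b) {j₀ : ℕ} (h : TwinExpansions (i + j₀ * n) a b) :
    xcoord n i a = xcoord n i b := by
  have hpar := even_S_sub_S_iff hn hi (by omega) h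
  have hmono : ∀ {s j}, s ≤ j → i + s * n ≤ i + j * n := fun hsj => by
    have := Nat.mul_le_mul_right n hsj; omega
  have hstrict : ∀ {s j}, s < j → i + s * n < i + j * n := fun {s j} hsj => by
    have : (s + 1) * n ≤ j * n := Nat.mul_le_mul_right n hsj
    rw [add_one_mul] at this; omega
  have hhead : ∀ j < j₀, xTerm n i a j = xTerm n i b j := fun j hj => by
    have heven : Even (S n i j a - S n i j b) := hpar j |>.2 <| by
      simp only [not_le.2 (hstrict hj), false_iff, not_exists, not_and]
      exact fun s hs hs' => (hstrict (lt_of_le_of_lt hs hj)).ne hs'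
    rw [← sub_eq_zero, xTerm, xTerm, ← sub_div, xiPerm_zpow_sub_xiPerm_zpow_of_even heven,
      h.eq_of_lt _ (by omega) (hstrict hj)]
    simp
  set ε : ℝ := (-1) ^ S n i j₀ a
  have htail : ∀ l, xTerm n i a (l + j₀) - xTerm n i b (l + j₀) =
      ε * ((a (i + (l + j₀) * n) : ℝ) - b (i + (l + j₀) * n)) / 3 ^ (l + j₀ + 1) := fun l => by
    have heven : Even (S n i (l + j₀) a - S n i (l + j₀) b) :=
      hpar _ |>.2 ⟨fun _ => ⟨j₀, by omega, rfl⟩, fun _ => hmono (by omega)⟩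
    rw [xTerm, xTerm, ← sub_div, xiPerm_zpow_sub_xiPerm_zpow_of_even heven,
      S_of_forall_gt_eq_zero hn (by omega) fun q hq => (h.tail q hq).1]
  have hsummable : Summable fun l => xTerm n i a (l + j₀) - xTerm n i b (l + j₀) :=
    ((summable_xTerm n i ha).sub (summable_xTerm n i hb)).comp_injective (add_left_injective j₀)
  rw [← sub_eq_zero, xcoord_eq_tsum_xTerm, xcoord_eq_tsum_xTerm,
    tsum_sub_tsum_eq_tsum_nat_add (summable_xTerm n i ha) (summable_xTerm n i hb) hhead,
    hsummable.tsum_eq_zero_add]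
  have hfirst : xTerm n i a (0 + j₀) - xTerm n i b (0 + j₀) = ε / 3 ^ (j₀ + 1) := by
    rw [htail, zero_add, h.eq_succ]
    push_cast
    ring
  have hrest : ∀ l, xTerm n i a (l + 1 + j₀) - xTerm n i b (l + 1 + j₀) =
      -ε * (2 / 3 ^ (l + (j₀ + 1) + 1)) := fun l => by
    have hgt : i + j₀ * n < i + (l + 1 + j₀) * n := hstrict (by omega)
    rw [htail, (h.tail _ hgt).1, (h.tail _ hgt).2]
    push_cast
    ring_nf
  rw [hfirst, tsum_congr hrest, tsum_mul_left, (hasSum_two_div_three_pow (j₀ + 1)).tsum_eq]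
  ring

theorem xcoord_eq_of_twinExpansions (hn : 1 ≤ n) (hi : 1 ≤ i) {a b : ℕ → ℕ}
    (ha : IsDigitSeq a) (hb : IsDigitSeq b) {p : ℕ} (hp : 1 ≤ p) (h : TwinExpansions p a b) :
    xcoord n i a = xcoord n i b := by
  by_cases hprog : ∃ j₀, i + j₀ * n = p
  · obtain ⟨j₀, rfl⟩ := hprog
    exact xcoord_eq_of_twinExpansions_add_mul hn hi ha hb h
  · push Not at hprog
    exact tsum_congr (xTerm_eq_of_twinExpansions_of_forall_ne hn hi hp h hprog)

theorem xcoord_eq_of_Phi_eq (hn : 1 ≤ n) (hi : 1 ≤ i) {a b : ℕ → ℕ} (ha : IsDigitSeq a)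
    (hb : IsDigitSeq b) (h : Phi a = Phi b) : xcoord n i a = xcoord n i b := by
  by_cases hab : ∀ q, 1 ≤ q → a q = b q
  · exact xcoord_congr hi hab
  push Not at hab
  classical
  obtain ⟨hp, hne⟩ := Nat.find_spec hab
  have hagree : ∀ q, 1 ≤ q → q < Nat.find hab → a q = b q := fun q hq hlt => by
    by_contra hne'
    exact Nat.find_min hab hlt ⟨hq, hne'⟩
  rcases lt_or_gt_of_ne hne with hlt | hlt
  · exact (xcoord_eq_of_twinExpansions hn hi hb ha hp (.of_Phi_eq hb ha h.symm hp
      (fun q hq hlt' => (hagree q hq hlt').symm) hlt)).symm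
  · exact xcoord_eq_of_twinExpansions hn hi ha hb hp (.of_Phi_eq ha hb h hp hagree hlt)

theorem peanoCoord_Phi (hn : 1 ≤ n) (hi : 1 ≤ i) {t : ℕ → ℕ} (ht : IsDigitSeq t) :
    peanoCoord n i (Phi t) = xcoord n i t :=
  xcoord_eq_of_Phi_eq hn hi (isDigitSeq_ternaryDigit _) ht
    (Phi_ternaryDigit (Phi_nonneg t) (Phi_le_one ht))

end Coordinates

/-- the self-affinity identity
`3^k (x_i(t) − x_i(t(k))) = (−1)^{σ(k)} x_i(3^{kn}(t − t(k)))`. -/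
theorem peanoCoord_self_affine_identity (n i : ℕ) (hn : 2 ≤ n) (hi1 : 1 ≤ i) (hin : i ≤ n)
    (a : ℕ → ℕ) (ha : IsDigitSeq a) (k : ℕ) (t tk : ℝ) (σ : ℤ)
    (htdef : t = Phi a)
    (htk : tk = Phi (fun s => if s ≤ k * n then a s else 0))
    (hσ : σ = (∑ q ∈ Finset.Icc 1 (k * n), (a q : ℤ)) -
      ∑ r ∈ Finset.range k, (a (i + r * n) : ℤ)) :
    (3 : ℝ) ^ k * (peanoCoord n i t - peanoCoord n i tk) =
      (-1 : ℝ) ^ σ * peanoCoord n i (3 ^ (k * n) * (t - tk)) := by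
  change tk = Phi (truncDigits (k * n) a) at htk
  change σ = selfAffineExponent n i k a at hσ
  have hscaled : (3 : ℝ) ^ (k * n) * (t - tk) = Phi (shiftDigits (k * n) a) := by
    rw [htdef, htk, Phi_sub_Phi_truncDigits ha]
    field_simp
  rw [hscaled, htdef, htk, peanoCoord_Phi (by omega) hi1 ha,
    peanoCoord_Phi (by omega) hi1 (ha.truncDigits _), peanoCoord_Phi (by omega) hi1
    (ha.shiftDigits _), xcoord_sub_xcoord_truncDigits hi1 hin ha, hσ]
  field_simp
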